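/- arXiv:2411.16048 — 2 statements merged into one kernel-verified Lean document; each statement's English description precedes it below -/
import Mathlib

section
/- Let $\alpha \in (0,1)$ and let $h \in C^{0,\alpha}_{loc}(\mathbb{R}^n)$ be $\alpha$-homogeneous at two distinct points $x_1 \ne x_2$ (i.e., $h(x_i + \lambda y) = \lambda^\alpha h(x_i + y)$ for all $\lambda > 0$ and $y \in \mathbb{R}^n$, for $i = 1,2$). Then $h$ is invariant under translations in the direction $x_1 - x_2$: for all $y \in \mathbb{R}^n$ and $t \in \mathbb{R}$, $h(y + t(x_1 - x_2)) = h(y)$; in particular $h$ is $1$-symmetric at $x_1$ with respect to $\mathrm{span}\{x_1 - x_2\}$. -/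
open Set

/-- Cone-splitting: if `h ∈ C^{0,α}_loc(ℝⁿ)` is `α`-homogeneous at two distinct
points `x₁ ≠ x₂`, then `h` is invariant under translations in the direction
`x₁ - x₂`; in particular `h` is `1`-symmetric at `x₁` with respect to
`span{x₁ - x₂}`. -/
theorem cone_splitting (n : ℕ) (α : ℝ) (hα₀ : 0 < α) (hα₁ : α < 1)
    (h : EuclideanSpace ℝ (Fin n) → ℝ)
    (hHolder : ∀ K : Set (EuclideanSpace ℝ (Fin n)), IsCompact K →
      ∃ C : NNReal, HolderOnWith C α.toNNReal h K)
    (x₁ x₂ : EuclideanSpace ℝ (Fin n)) (hne : x₁ ≠ x₂)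
    (hhom₁ : ∀ l : ℝ, 0 < l → ∀ y, h (x₁ + l • y) = l ^ α * h (x₁ + y))
    (hhom₂ : ∀ l : ℝ, 0 < l → ∀ y, h (x₂ + l • y) = l ^ α * h (x₂ + y)) :
    ∀ (y : EuclideanSpace ℝ (Fin n)) (t : ℝ), h (y + t • (x₁ - x₂)) = h y := by
  have key : ∀ t : ℝ, t < 1 → ∀ y, h (y + t • (x₁ - x₂)) = h y := by
    intro t ht y
    set l : ℝ := 1 - t with hl
    have hl0 : 0 < l := by simp [hl]; linarith
    have h1 := hhom₁ l hl0 ((x₂ - x₁) + l⁻¹ • (y - x₂))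
    have h2 := hhom₂ l⁻¹ (by positivity) (y - x₂)
    have hc : l • (l⁻¹ • (y - x₂)) = y - x₂ := smul_inv_smul₀ hl0.ne' _
    have e1 : x₁ + l • ((x₂ - x₁) + l⁻¹ • (y - x₂)) = y + t • (x₁ - x₂) := by
      rw [smul_add, hc, hl]
      module
    have e2 : x₁ + ((x₂ - x₁) + l⁻¹ • (y - x₂)) = x₂ + l⁻¹ • (y - x₂) := by
      abel
    have e3 : x₂ + (y - x₂) = y := by abel
    rw [e1, e2] at h1
    rw [e3] at h2
    rw [h1, h2, ← mul_assoc, ← Real.mul_rpow hl0.le (inv_nonneg.mpr hl0.le),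
      mul_inv_cancel₀ hl0.ne', Real.one_rpow, one_mul]
  intro y t
  rcases lt_or_ge t 1 with h' | h'
  · exact key t h' y
  · have := key (-t) (by linarith) (y + t • (x₁ - x₂))
    have e : y + t • (x₁ - x₂) + (-t) • (x₁ - x₂) = y := by module
    rw [e] at this
    exact this.symm
end

section
/- Let $\alpha \in (0,1)$, $k \in \{0,\dots,n-1\}$, and $h \in C^{0,\alpha}_{loc}(\mathbb{R}^n)$. If $h$ is $k$-symmetric at $0$ with respect to $V \in \mathbb{G}(n,k)$, and $h$ is $\alpha$-homogeneous at some point $x \notin V$, then $h$ is $(k+1)$-symmetric with respect to $\mathrm{span}\{x, V\}$. -/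
open Set

/-- Quantitative cone-splitting corollary: if `h ∈ C^{0,α}_loc(ℝⁿ)` is
`k`-symmetric at `0` with respect to a `k`-dimensional subspace `V` and
`α`-homogeneous at some `x ∉ V`, then `h` is `(k+1)`-symmetric with respect
to `span{x, V}`. -/
theorem cone_splitting_corollary (n k : ℕ) (hk : k < n) (α : ℝ)
    (hα₀ : 0 < α) (hα₁ : α < 1)
    (h : EuclideanSpace ℝ (Fin n) → ℝ)
    (hHolder : ∀ K : Set (EuclideanSpace ℝ (Fin n)), IsCompact K →
      ∃ C : NNReal, HolderOnWith C α.toNNReal h K)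
    (V : Submodule ℝ (EuclideanSpace ℝ (Fin n))) (hV : Module.finrank ℝ V = k)
    (hhom0 : ∀ l : ℝ, 0 < l → ∀ y, h (l • y) = l ^ α * h y)
    (hinv : ∀ v ∈ V, ∀ y, h (y + v) = h y)
    (x : EuclideanSpace ℝ (Fin n)) (hx : x ∉ V)
    (hhomx : ∀ l : ℝ, 0 < l → ∀ y, h (x + l • y) = l ^ α * h (x + y)) :
    Module.finrank ℝ ↥(V ⊔ Submodule.span ℝ {x}) = k + 1 ∧
    (∀ l : ℝ, 0 < l → ∀ y, h (l • y) = l ^ α * h y) ∧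
    (∀ v ∈ V ⊔ Submodule.span ℝ {x}, ∀ y, h (y + v) = h y) := by
  have hx0 : x ≠ 0 := by
    rintro rfl; exact hx V.zero_mem
  -- invariance in the x direction, first for small shifts
  have key1 : ∀ t : ℝ, t < 1 → ∀ w, h (w + t • x) = h w := by
    intro t ht w
    have hl : (0:ℝ) < 1 - t := by linarith
    have hl' : (0:ℝ) < 1 / (1 - t) := by positivity
    have e1 : w + t • x = x + (1 - t) • ((1 / (1 - t)) • (w + (t - 1) • x)) := by
      rw [smul_smul, mul_one_div, div_self hl.ne', one_smul]
      module
    have e2 : x + (1 / (1 - t)) • (w + (t - 1) • x) = (1 / (1 - t)) • w := by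
      rw [smul_add, smul_smul]
      rw [show (1 / (1 - t)) * (t - 1) = -1 by field_simp; ring]
      module
    rw [e1, hhomx _ hl, e2, hhom0 _ hl', ← mul_assoc, ← Real.mul_rpow hl.le hl'.le]
    rw [show (1 - t) * (1 / (1 - t)) = 1 by field_simp, Real.one_rpow, one_mul]
  -- iterate to get arbitrary shifts along x
  have keyN : ∀ (m : ℕ) (s : ℝ), s < 1 → ∀ w, h (w + (m : ℝ) • s • x) = h w := by
    intro m
    induction m with
    | zero => intro s _ w; simp
    | succ m ih =>
        intro s hs w
        have : w + ((m + 1 : ℕ) : ℝ) • s • x = (w + (m : ℝ) • s • x) + s • x := by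
          push_cast; module
        rw [this, key1 s hs, ih s hs]
  have keyx : ∀ t : ℝ, ∀ w, h (w + t • x) = h w := by
    intro t w
    obtain ⟨m, hm⟩ := exists_nat_gt t
    rcases Nat.eq_zero_or_pos m with rfl | hm0
    · exact key1 t (by exact_mod_cast hm.trans_le (by norm_num)) w
    · have hmR : (0:ℝ) < m := by exact_mod_cast hm0
      have hs : t / m < 1 := (div_lt_one hmR).mpr hm
      have : t • x = (m : ℝ) • (t / m) • x := by
        rw [smul_smul, mul_div_cancel₀ _ hmR.ne']
      rw [this, keyN m _ hs]
  refine ⟨?_, hhom0, ?_⟩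
  · have hinf : V ⊓ Submodule.span ℝ {x} = ⊥ := by
      rw [eq_bot_iff]
      rintro v ⟨hv1, hv2⟩
      obtain ⟨c, rfl⟩ := Submodule.mem_span_singleton.mp hv2
      rcases eq_or_ne c 0 with rfl | hc
      · simp
      · exact absurd (by simpa [smul_smul, inv_mul_cancel₀ hc] using V.smul_mem c⁻¹ hv1) hx
    have := Submodule.finrank_sup_add_finrank_inf_eq V (Submodule.span ℝ {x})
    rw [hinf, hV, finrank_span_singleton hx0] at this
    simpa using this
  · intro v hv y
    obtain ⟨v₁, hv₁, v₂, hv₂, rfl⟩ := Submodule.mem_sup.mp hv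
    obtain ⟨c, rfl⟩ := Submodule.mem_span_singleton.mp hv₂
    rw [show y + (v₁ + c • x) = (y + v₁) + c • x by module, keyx, hinv v₁ hv₁]
end
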